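/- Let G be a simple graph on Fin 15 with G.IsSRGWith 15 6 1 3. Then the characteristic polynomial of G.adjMatrix ℚ equals (X − 6) * (X − 1)^9 * (X + 3)^5 in ℚ[X]. In particular the eigenvalues of the adjacency matrix are 6, 1, −3 with multiplicities 1, 9, 5. -/

import Mathlib

/-!
Counting walks of length two gives `A² + 2A - 3 = 3J` and regularity gives `AJ = 6J`, so
`(A - 6)(A - 1)(A + 3) = 0` and every eigenvalue is `6`, `1` or `-3`. If they occur with
multiplicities `a, b, c`, then `a + b + c = 15` and `6a + b - 3c = tr A = 0`, whose only solutions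
are `(1, 9, 5)` and `(5, 0, 10)`. The second is impossible: if `1` were not an eigenvalue, `A - 1`
would be invertible, hence `(A - 6)(A + 3) = 0` and `5(A + 3) = (A - 1)(A + 3) = 3J`, which fails
on the diagonal.
-/

open Polynomial Matrix

namespace Polynomial

theorem Splits.eq_prod_X_sub_C_pow_count {K : Type*} [Field K] [DecidableEq K] {p : K[X]}
    (hp : p.Splits) (hm : p.Monic) {s : Finset K} (hs : ∀ x ∈ p.roots, x ∈ s) :
    p = ∏ x ∈ s, (X - C x) ^ p.roots.count x := by
  conv_lhs => rw [hp.eq_prod_roots_of_monic hm, Finset.prod_multiset_map_count]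
  refine Finset.prod_subset (fun x hx => hs x (Multiset.mem_toFinset.1 hx)) fun x _ hx => ?_
  rw [Multiset.count_eq_zero.2 (mt Multiset.mem_toFinset.2 hx), pow_zero]

end Polynomial

namespace Matrix

variable {n K : Type*} [Fintype n] [DecidableEq n] [Field K]

theorem isRoot_of_aeval_eq_zero {A : Matrix n n K} {p : K[X]} (hp : aeval A p = 0) {r : K}
    (hr : A.charpoly.IsRoot r) : p.IsRoot r := by
  rcases isEmpty_or_nonempty n with hn | hn
  · simp [charpoly] at hr
  have := spectrum.subset_polynomial_aeval A p ⟨r, mem_spectrum_iff_isRoot_charpoly.2 hr, rfl⟩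
  rwa [hp, spectrum.zero_eq, Set.mem_singleton_iff] at this

variable [IsAlgClosed K] [DecidableEq K] (A : Matrix n n K) {s : Finset K}

theorem sum_count_roots_charpoly (hs : ∀ x ∈ A.charpoly.roots, x ∈ s) :
    ∑ x ∈ s, A.charpoly.roots.count x = Fintype.card n := by
  rw [Multiset.sum_count_eq_card hs, splits_iff_card_roots.1 (IsAlgClosed.splits _),
    charpoly_natDegree_eq_dim]

theorem trace_eq_sum_count_roots_charpoly (hs : ∀ x ∈ A.charpoly.roots, x ∈ s) :
    A.trace = ∑ x ∈ s, A.charpoly.roots.count x • x := by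
  rw [trace_eq_sum_roots_charpoly,
    Finset.sum_multiset_count_of_subset _ _ fun x hx => hs x (Multiset.mem_toFinset.1 hx)]

end Matrix

namespace SimpleGraph

variable {V α : Type*} (G : SimpleGraph V) [DecidableRel G.Adj]

theorem adjMatrix_compl [DecidableEq V] [AddGroupWithOne α] :
    Gᶜ.adjMatrix α = of 1 - 1 - G.adjMatrix α := by
  ext i j
  rcases eq_or_ne i j with rfl | hij
  · simp
  · by_cases h : G.Adj i j <;> simp [one_apply_ne hij, h, hij]

variable {G}

theorem adjMatrix_map {β : Type*} [NonAssocSemiring α] [NonAssocSemiring β] (f : α →+* β) :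
    (G.adjMatrix α).map f = G.adjMatrix β := by
  ext i j
  by_cases h : G.Adj i j <;> simp [h]

theorem IsRegularOfDegree.adjMatrix_mul_of_one [Fintype V] [NonAssocSemiring α] {d : ℕ}
    (h : G.IsRegularOfDegree d) : G.adjMatrix α * of 1 = (d : α) • of 1 := by
  ext i j
  simp [adjMatrix_mul_apply, h i]

theorem IsSRGWith.aeval_adjMatrix [Fintype V] [DecidableEq V] [CommRing α] {n k ℓ μ : ℕ}
    (h : G.IsSRGWith n k ℓ μ) :
    aeval (G.adjMatrix α) (X ^ 2 - C ((ℓ : α) - μ) * X - C ((k : α) - μ)) = (μ : α) • of 1 := by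
  rw [map_sub, map_sub, map_mul, map_pow, aeval_X, aeval_C, aeval_C, ← Algebra.smul_def,
    Algebra.algebraMap_eq_smul_one, h.matrix_eq, adjMatrix_compl]
  module

end SimpleGraph

namespace SimpleGraph.IsSRGWith

variable {V K : Type*} [Fintype V] [DecidableEq V] {G : SimpleGraph V} [DecidableRel G.Adj]
  {n : ℕ} [Field K]

theorem aeval_adjMatrix_sub_one_mul_add_three (hG : G.IsSRGWith n 6 1 3) :
    aeval (G.adjMatrix K) ((X - 1) * (X + 3) : K[X]) = (3 : K) • of 1 := by
  have h := hG.aeval_adjMatrix (α := K)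
  rwa [show (X ^ 2 - C (((1 : ℕ) : K) - (3 : ℕ)) * X - C (((6 : ℕ) : K) - (3 : ℕ)) : K[X]) =
    (X - 1) * (X + 3) by simp only [map_sub, map_natCast]; push_cast; ring, Nat.cast_ofNat] at h

theorem aeval_adjMatrix_eq_zero (hG : G.IsSRGWith n 6 1 3) :
    aeval (G.adjMatrix K) ((X - 6) * ((X - 1) * (X + 3)) : K[X]) = 0 := by
  rw [map_mul, hG.aeval_adjMatrix_sub_one_mul_add_three, mul_smul_comm, map_sub, aeval_X,
    map_ofNat, sub_mul, hG.regular.adjMatrix_mul_of_one, ← Nat.ofNat_nsmul_eq_mul,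
    Nat.cast_smul_eq_nsmul, sub_self, smul_zero]

theorem mem_of_isRoot_charpoly (hG : G.IsSRGWith n 6 1 3) {r : K}
    (hr : (G.adjMatrix K).charpoly.IsRoot r) : r ∈ ({6, 1, -3} : Set K) := by
  have := isRoot_of_aeval_eq_zero hG.aeval_adjMatrix_eq_zero hr
  simp only [IsRoot, eval_mul, eval_sub, eval_add, eval_X, eval_ofNat, eval_one, mul_eq_zero,
    sub_eq_zero, add_eq_zero_iff_eq_neg] at this
  simpa using this

theorem one_mem_spectrum [Nonempty V] [CharZero K] (hG : G.IsSRGWith n 6 1 3) :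
    (1 : K) ∈ spectrum K (G.adjMatrix K) := by
  rw [spectrum.mem_iff, map_one]
  intro hunit
  have h₀ : aeval (G.adjMatrix K) ((X - 6) * (X + 3) : K[X]) = 0 := by
    rw [show 1 - G.adjMatrix K = aeval (G.adjMatrix K) (1 - X : K[X]) by simp] at hunit
    rw [← hunit.mul_right_eq_zero, ← map_mul, ← neg_eq_zero, ← map_neg,
      ← hG.aeval_adjMatrix_eq_zero]
    congr 1
    ring
  have h₁ : aeval (G.adjMatrix K) ((5 : K) • (X + 3) : K[X]) = (3 : K) • of 1 := by
    rw [← hG.aeval_adjMatrix_sub_one_mul_add_three, ← sub_zero (aeval _ ((X - 1) * _)), ← h₀,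
      ← map_sub]
    congr 1
    rw [smul_eq_C_mul, map_ofNat]
    ring
  obtain ⟨v⟩ := ‹Nonempty V›
  have := congrFun₂ h₁ v v
  norm_num [map_ofNat, ofNat_apply] at this

end SimpleGraph.IsSRGWith

/-- Lemma 6.1: the characteristic polynomial of the adjacency matrix of the
point graph of `GQ(2,2)` (a strongly regular graph with parameters
`(15,6,1,3)`) is `(X−6)(X−1)⁹(X+3)⁵`, so the eigenvalues are `6, 1, −3` with
multiplicities `1, 9, 5`. -/
theorem stmt_14 (G : SimpleGraph (Fin 15)) [DecidableRel G.Adj]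
    (hG : G.IsSRGWith 15 6 1 3) :
    (G.adjMatrix ℚ).charpoly =
      (X - C (6 : ℚ)) * (X - C (1 : ℚ)) ^ 9 * (X + C (3 : ℚ)) ^ 5 := by
  have hroots : ∀ r ∈ (G.adjMatrix ℂ).charpoly.roots, r ∈ ({6, 1, -3} : Finset ℂ) :=
    fun r hr => by simpa using hG.mem_of_isRoot_charpoly (isRoot_of_mem_roots hr)
  have hfactor := (IsAlgClosed.splits _).eq_prod_X_sub_C_pow_count (charpoly_monic _) hroots
  have hcard := (G.adjMatrix ℂ).sum_count_roots_charpoly hroots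
  have htrace := (G.adjMatrix ℂ).trace_eq_sum_count_roots_charpoly hroots
  have hone : (G.adjMatrix ℂ).charpoly.roots.count 1 ≠ 0 :=
    Multiset.count_ne_zero.2 <| (mem_roots (charpoly_monic _).ne_zero).2 <|
      mem_spectrum_iff_isRoot_charpoly.1 hG.one_mem_spectrum
  norm_num [Finset.sum_insert, Finset.prod_insert, -count_roots] at hfactor hcard htrace
  set a := (G.adjMatrix ℂ).charpoly.roots.count 6
  set b := (G.adjMatrix ℂ).charpoly.roots.count 1
  set c := (G.adjMatrix ℂ).charpoly.roots.count (-3)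
  have htrace_nat : 6 * a + b = 3 * c := by
    exact_mod_cast (by linear_combination -htrace : (6 * a + b : ℂ) = 3 * c)
  obtain ⟨ha, hb, hc⟩ : a = 1 ∧ b = 9 ∧ c = 5 := by omega
  apply map_injective (algebraMap ℚ ℂ) (algebraMap ℚ ℂ).injective
  rw [← charpoly_map, SimpleGraph.adjMatrix_map, hfactor, ha, hb, hc]
  simp [mul_assoc]
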